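/- Let m_θ ≥ 2 and m_φ ≥ 1 be natural numbers and set m := m_φ·(m_θ − 1) + 1. For x ∈ {0, 1, …, m−1} define θ(x) := arccos( 2·(⌊x/m_φ⌋ + 1)/m_θ − 1 ) and φ(x) := π·(x mod m_φ)/m_φ, and define the vectors v₀(x) := (cos(θ(x)/2), e^{iφ(x)}·sin(θ(x)/2)) ∈ ℂ² and v₁(x) := (sin(θ(x)/2), −e^{iφ(x)}·cos(θ(x)/2)) ∈ ℂ². Then: (a) for every x ∈ {0,…,m−1}, the pair {v₀(x), v₁(x)} is an orthonormal basis of ℂ², i.e. ‖v₀(x)‖ = ‖v₁(x)‖ = 1 and ⟨v₀(x), v₁(x)⟩ = 0; (b) the map x ↦ v₀(x)v₀(x)† (the rank-one orthogonal projection onto v₀(x)) is injective on {0,…,m−1}. -/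

import Mathlib

/-!
The diagonal entry `cos²(θ/2) = (1 + cos θ)/2` of `v₀v₀†` equals `(⌊x/m_φ⌋ + 1)/m_θ`, so the
projection determines `⌊x/m_φ⌋`. Off the pole `θ = 0` the entry `e^{iφ} sin θ / 2` then determines
`e^{iφ}`, hence `φ ∈ [0, π)` and `x mod m_φ`. The pole occurs only in the last row, where
`x ≤ m_φ (m_θ − 1)` forces `x mod m_φ = 0`.
-/

open BigOperators

noncomputable section

/-- Outer product vv† as a matrix. -/
def outer {ι : Type*} [Fintype ι] (ψ : ι → ℂ) : Matrix ι ι ℂ :=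
  fun i j => ψ i * (starRingEnd ℂ) (ψ j)

/-- The polar angle θ(x) = arccos(2(⌊x/m_φ⌋ + 1)/m_θ − 1). -/
def theta (mθ mφ x : ℕ) : ℝ :=
  Real.arccos (2 * ((x / mφ + 1 : ℕ) : ℝ) / (mθ : ℝ) - 1)

/-- The azimuthal angle φ(x) = π (x mod m_φ)/m_φ. -/
def phi (mφ x : ℕ) : ℝ := Real.pi * ((x % mφ : ℕ) : ℝ) / (mφ : ℝ)

/-- The basis vector v₀(x) = (cos(θ(x)/2), e^{iφ(x)} sin(θ(x)/2)). -/
def v0 (mθ mφ x : ℕ) : Fin 2 → ℂ :=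
  ![(Real.cos (theta mθ mφ x / 2) : ℂ),
    Complex.exp (Complex.I * (phi mφ x : ℂ)) * (Real.sin (theta mθ mφ x / 2) : ℂ)]

/-- The basis vector v₁(x) = (sin(θ(x)/2), −e^{iφ(x)} cos(θ(x)/2)). -/
def v1 (mθ mφ x : ℕ) : Fin 2 → ℂ :=
  ![(Real.sin (theta mθ mφ x / 2) : ℂ),
    -(Complex.exp (Complex.I * (phi mφ x : ℂ)) * (Real.cos (theta mθ mφ x / 2) : ℂ))]

open Real

def blochVector (t p : ℝ) : Fin 2 → ℂ :=
  ![(cos t : ℂ), Complex.exp (Complex.I * p) * (sin t : ℂ)]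

def blochVectorPerp (t p : ℝ) : Fin 2 → ℂ :=
  ![(sin t : ℂ), -(Complex.exp (Complex.I * p) * (cos t : ℂ))]

lemma sum_norm_sq_blochVector (t p : ℝ) : ∑ i, ‖blochVector t p i‖ ^ 2 = 1 := by
  simp only [blochVector, Fin.sum_univ_two, Matrix.cons_val_zero, Matrix.cons_val_one,
    norm_mul, Complex.norm_real, Complex.norm_exp_I_mul_ofReal, one_mul, norm_eq_abs, sq_abs]
  exact cos_sq_add_sin_sq t

lemma sum_norm_sq_blochVectorPerp (t p : ℝ) : ∑ i, ‖blochVectorPerp t p i‖ ^ 2 = 1 := by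
  simp only [blochVectorPerp, Fin.sum_univ_two, Matrix.cons_val_zero, Matrix.cons_val_one,
    norm_neg, norm_mul, Complex.norm_real, Complex.norm_exp_I_mul_ofReal, one_mul, norm_eq_abs,
    sq_abs]
  exact sin_sq_add_cos_sq t

lemma sum_conj_blochVector_mul_blochVectorPerp (t p : ℝ) :
    ∑ i, (starRingEnd ℂ) (blochVector t p i) * blochVectorPerp t p i = 0 := by
  have h : (starRingEnd ℂ) (Complex.exp (Complex.I * p)) * Complex.exp (Complex.I * p) = 1 := by
    rw [← Complex.normSq_eq_conj_mul_self, Complex.normSq_eq_norm_sq,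
      Complex.norm_exp_I_mul_ofReal, one_pow, Complex.ofReal_one]
  simp only [blochVector, blochVectorPerp, Fin.sum_univ_two, Matrix.cons_val_zero,
    Matrix.cons_val_one, map_mul, Complex.conj_ofReal]
  linear_combination (-(sin t : ℂ) * cos t) * h

lemma outer_blochVector_zero_zero (t p : ℝ) :
    outer (blochVector t p) 0 0 = ((1 + cos (2 * t)) / 2 : ℝ) := by
  simp only [outer, blochVector, Matrix.cons_val_zero, Complex.conj_ofReal, cos_two_mul]
  push_cast
  ring

lemma outer_blochVector_one_zero (t p : ℝ) :
    outer (blochVector t p) 1 0 = Complex.exp (Complex.I * p) * (sin (2 * t) / 2 : ℝ) := by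
  simp only [outer, blochVector, Matrix.cons_val_zero, Matrix.cons_val_one, Complex.conj_ofReal,
    sin_two_mul]
  push_cast
  ring

lemma eq_of_exp_I_mul_eq {a b c d : ℝ} (hcd : d - c ≤ 2 * π) (ha : a ∈ Set.Ico c d)
    (hb : b ∈ Set.Ico c d) (h : Complex.exp (Complex.I * a) = Complex.exp (Complex.I * b)) :
    a = b :=
  Circle.exp_injOn_Ico hcd ha hb <| Circle.ext <| by simpa only [Circle.coe_exp, mul_comm] using h

lemma Nat.mod_eq_zero_of_le_mul_of_le_div {x n k : ℕ} (hx : x ≤ n * k) (hk : k ≤ x / n) :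
    x % n = 0 := by
  have := Nat.div_add_mod x n
  have := Nat.mul_le_mul_left n hk
  omega

section

variable {mθ mφ x y : ℕ}

lemma v0_eq_blochVector : v0 mθ mφ x = blochVector (theta mθ mφ x / 2) (phi mφ x) := rfl

lemma theta_congr (h : x / mφ = y / mφ) : theta mθ mφ x = theta mθ mφ y := by
  rw [theta, theta, h]

lemma cos_theta (hmθ : 0 < mθ) (h : x / mφ + 1 ≤ mθ) :
    cos (theta mθ mφ x) = 2 * ((x / mφ + 1 : ℕ) : ℝ) / mθ - 1 := by
  have hq : ((x / mφ + 1 : ℕ) : ℝ) ≤ mθ := by exact_mod_cast h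
  have hmθ' : (0 : ℝ) < mθ := by exact_mod_cast hmθ
  refine cos_arccos ?_ ?_
  · have : (0 : ℝ) ≤ 2 * ((x / mφ + 1 : ℕ) : ℝ) / mθ := by positivity
    linarith
  · rw [sub_le_iff_le_add, div_le_iff₀ hmθ']
    linarith

lemma sin_theta_pos (hmθ : 0 < mθ) (h : x / mφ + 1 < mθ) : 0 < sin (theta mθ mφ x) := by
  have hq : ((x / mφ + 1 : ℕ) : ℝ) < mθ := by exact_mod_cast h
  have hmθ' : (0 : ℝ) < mθ := by exact_mod_cast hmθ
  refine sin_pos_of_pos_of_lt_pi (arccos_pos.2 ?_) (arccos_lt_pi.2 ?_)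
  · rw [sub_lt_iff_lt_add, div_lt_iff₀ hmθ']
    linarith
  · have : (0 : ℝ) < 2 * ((x / mφ + 1 : ℕ) : ℝ) / mθ := by positivity
    linarith

lemma phi_mem_Ico (hmφ : 0 < mφ) : phi mφ x ∈ Set.Ico 0 π := by
  have hr : ((x % mφ : ℕ) : ℝ) < mφ := by exact_mod_cast Nat.mod_lt x hmφ
  have hmφ' : (0 : ℝ) < mφ := by exact_mod_cast hmφ
  refine ⟨by unfold phi; positivity, ?_⟩
  rw [phi, div_lt_iff₀ hmφ']
  exact mul_lt_mul_of_pos_left hr pi_pos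

lemma mod_eq_of_phi_eq (hmφ : 0 < mφ) (h : phi mφ x = phi mφ y) : x % mφ = y % mφ := by
  have hmφ' : (mφ : ℝ) ≠ 0 := by exact_mod_cast hmφ.ne'
  rw [phi, phi, div_left_inj' hmφ', mul_right_inj' pi_ne_zero] at h
  exact_mod_cast h

lemma outer_v0_zero_zero (hmθ : 0 < mθ) (h : x / mφ + 1 ≤ mθ) :
    outer (v0 mθ mφ x) 0 0 = (((x / mφ + 1 : ℕ) : ℝ) / mθ : ℝ) := by
  have hmθ' : (mθ : ℝ) ≠ 0 := by exact_mod_cast hmθ.ne'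
  rw [v0_eq_blochVector, outer_blochVector_zero_zero, mul_div_cancel₀ _ two_ne_zero,
    cos_theta hmθ h]
  congr 1
  field_simp
  ring

lemma div_eq_of_outer_v0_eq (hmθ : 0 < mθ) (hx : x / mφ + 1 ≤ mθ) (hy : y / mφ + 1 ≤ mθ)
    (h : outer (v0 mθ mφ x) = outer (v0 mθ mφ y)) : x / mφ = y / mφ := by
  have hmθ' : (mθ : ℝ) ≠ 0 := by exact_mod_cast hmθ.ne'
  have h00 := congrFun (congrFun h 0) 0
  rw [outer_v0_zero_zero hmθ hx, outer_v0_zero_zero hmθ hy, Complex.ofReal_inj,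
    div_left_inj' hmθ'] at h00
  exact_mod_cast Nat.succ_injective (by exact_mod_cast h00)

lemma mod_eq_of_outer_v0_eq (hmθ : 0 < mθ) (hmφ : 0 < mφ) (hx : x / mφ + 1 < mθ)
    (hq : x / mφ = y / mφ) (h : outer (v0 mθ mφ x) = outer (v0 mθ mφ y)) :
    x % mφ = y % mφ := by
  have h10 := congrFun (congrFun h 1) 0
  rw [v0_eq_blochVector, v0_eq_blochVector, outer_blochVector_one_zero,
    outer_blochVector_one_zero, mul_div_cancel₀ _ two_ne_zero, mul_div_cancel₀ _ two_ne_zero,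
    theta_congr hq] at h10
  have hsin : ((sin (theta mθ mφ y) / 2 : ℝ) : ℂ) ≠ 0 := by
    have := sin_theta_pos hmθ (hq ▸ hx)
    exact_mod_cast (half_pos this).ne'
  exact mod_eq_of_phi_eq hmφ <| eq_of_exp_I_mul_eq (by linarith [pi_pos])
    (phi_mem_Ico hmφ) (phi_mem_Ico hmφ) (mul_right_cancel₀ hsin h10)

lemma outer_v0_injOn (hmθ : 0 < mθ) (hmφ : 0 < mφ) :
    Set.InjOn (fun x => outer (v0 mθ mφ x)) (Set.Iic (mφ * (mθ - 1))) := by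
  intro x hx y hy h
  have hdiv : ∀ z ∈ Set.Iic (mφ * (mθ - 1)), z / mφ + 1 ≤ mθ := fun z hz => by
    have := Nat.div_le_of_le_mul hz
    omega
  have hq := div_eq_of_outer_v0_eq hmθ (hdiv x hx) (hdiv y hy) h
  have hr : x % mφ = y % mφ := by
    rcases (hdiv x hx).lt_or_eq with hlt | hpole
    · exact mod_eq_of_outer_v0_eq hmθ hmφ hlt hq h
    · rw [Nat.mod_eq_zero_of_le_mul_of_le_div hx (by omega),
        Nat.mod_eq_zero_of_le_mul_of_le_div hy (by omega)]
  rw [← Nat.div_add_mod x mφ, ← Nat.div_add_mod y mφ, hq, hr]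

end

theorem bloch_sphere_bases (mθ mφ : ℕ) (hmθ : 2 ≤ mθ) (hmφ : 1 ≤ mφ)
    (m : ℕ) (hm : m = mφ * (mθ - 1) + 1) :
    (∀ x : Fin m,
      (∑ i, ‖v0 mθ mφ (x : ℕ) i‖ ^ 2 = 1) ∧
      (∑ i, ‖v1 mθ mφ (x : ℕ) i‖ ^ 2 = 1) ∧
      (∑ i, (starRingEnd ℂ) (v0 mθ mφ (x : ℕ) i) * v1 mθ mφ (x : ℕ) i = 0)) ∧
    Function.Injective (fun x : Fin m => outer (v0 mθ mφ (x : ℕ))) := by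
  refine ⟨fun x => ⟨sum_norm_sq_blochVector _ _, sum_norm_sq_blochVectorPerp _ _,
    sum_conj_blochVector_mul_blochVectorPerp _ _⟩, fun x y h => Fin.ext ?_⟩
  have hmem : ∀ z : Fin m, (z : ℕ) ∈ Set.Iic (mφ * (mθ - 1)) := fun z =>
    Nat.le_of_lt_succ (hm ▸ z.isLt)
  exact outer_v0_injOn (by omega) hmφ (hmem x) (hmem y) h

end
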